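/- arXiv:1012.2089 — 2 statements merged into one kernel-verified Lean document; each statement's English description precedes it below -/
import Mathlib

section
/- Let q ≡ 3 (mod 4), τ the canonical additive character of F_q, and z = Σ_{s ∈ (F_q^*)²} τ(s). For i, j ∈ F_q, the character sum Σ_{s ∈ (F_q^*)², x ∈ F_q} τ(s·x²/2 + s(i+j)) equals ((q-1)/2)·(1 + 2 z^{σ(2)}) if i + j = 0, and equals z^{σ(i+j)}·(1 + 2 z^{σ(2)}) if i + j ≠ 0, where z^{σ(a)} = z if a is a square in F_q^* and z^{σ(a)} = z̄ if a is a non-square. -/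
open scoped Classical

/-- The set of nonzero squares of a finite field, as a `Finset`. -/
noncomputable def sqFinset (F : Type*) [Field F] [Fintype F] : Finset F :=
  Finset.univ.filter fun x : F => x ≠ 0 ∧ IsSquare x

/-- `z = Σ_{x ∈ (F_q^*)²} τ(x)`. -/
noncomputable def zval {F : Type*} [Field F] [Fintype F] (ψ : AddChar F ℂ) : ℂ :=
  ∑ x ∈ sqFinset F, ψ x

/-- `z^{σ(a)}`: equal to `z` if `a` is a square and to `z̄` otherwise. -/
noncomputable def zsig {F : Type*} [Field F] [Fintype F] (ψ : AddChar F ℂ) (a : F) : ℂ :=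
  if IsSquare a then zval ψ else (starRingEnd ℂ) (zval ψ)

/-!
Write the summand as `τ(s(i+j)) · τ((s/2)x²)`. Since every nonzero square has exactly two square
roots, `Σ_x τ(c x²) = 1 + 2 Σ_{t ∈ (F_q^*)²} τ(c t)`, and the last sum is `z` when `c` is a square
and `z̄` otherwise: multiplication by a nonzero square permutes the squares, and since `-1` is not
a square when `q ≡ 3 (mod 4)`, `-c` is a square whenever `c` is not, while `τ(-x) = τ(x)‾`.
As `s/2` and `2` have the same quadratic character, the inner sum is `τ(s(i+j))(1 + 2z^{σ(2)})`,
and summing `τ(s(i+j))` over `s` gives `(q-1)/2` or `z^{σ(i+j)}` by the same facts.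
-/

open Finset

lemma isSquare_mul_iff_of_isSquare {G₀ : Type*} [CommGroupWithZero G₀] {c : G₀} (hc : c ≠ 0)
    (hsq : IsSquare c) {a : G₀} : IsSquare (c * a) ↔ IsSquare a :=
  ⟨fun h => by simpa [hc] using (isSquare_inv.mpr hsq).mul h, hsq.mul⟩

section
variable {F : Type*} [Field F] [Fintype F]

lemma mem_sqFinset {x : F} : x ∈ sqFinset F ↔ x ≠ 0 ∧ IsSquare x := by
  simp [sqFinset]

lemma ringChar_ne_two_of_card_mod_four (hq : Fintype.card F % 4 = 3) : ringChar F ≠ 2 := by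
  rw [Ne, FiniteField.even_card_iff_char_two]
  omega

lemma isSquare_neg_of_not_isSquare (hq : Fintype.card F % 4 = 3) {c : F} (hc : ¬IsSquare c) :
    IsSquare (-c) := by
  have hc0 : c ≠ 0 := by
    rintro rfl
    exact hc IsSquare.zero
  have hneg : ¬IsSquare (-1 : F) := by
    rw [FiniteField.isSquare_neg_one_iff]
    omega
  rw [← quadraticChar_one_iff_isSquare (neg_ne_zero.mpr hc0), neg_eq_neg_one_mul, map_mul,
    quadraticChar_neg_one_iff_not_isSquare.mpr hneg, quadraticChar_neg_one_iff_not_isSquare.mpr hc]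
  norm_num

lemma card_filter_sq_eq_two (hF : ringChar F ≠ 2) {t : F} (ht : t ∈ sqFinset F) :
    #{x | x ^ 2 = t} = 2 := by
  rw [mem_sqFinset] at ht
  have h := quadraticChar_card_sqrts hF t
  rw [(quadraticChar_one_iff_isSquare ht.1).mpr ht.2, Set.toFinset_ofPred] at h
  omega

lemma image_sq_univ : univ.image (fun x : F => x ^ 2) = insert 0 (sqFinset F) := by
  ext t
  simp only [mem_image, mem_univ, true_and, mem_insert, mem_sqFinset]
  constructor
  · rintro ⟨x, rfl⟩
    by_cases hx : x = 0
    · simp [hx]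
    · exact Or.inr ⟨pow_ne_zero 2 hx, x, sq x⟩
  · rintro (rfl | ⟨-, r, rfl⟩)
    · exact ⟨0, zero_pow two_ne_zero⟩
    · exact ⟨r, sq r⟩

lemma sum_comp_sq {M : Type*} [AddCommMonoid M] (hF : ringChar F ≠ 2) (f : F → M) :
    ∑ x, f (x ^ 2) = f 0 + 2 • ∑ t ∈ sqFinset F, f t := by
  rw [sum_comp, image_sq_univ, sum_insert (by simp [mem_sqFinset]), smul_sum]
  congr 1
  · rw [card_eq_one.mpr ⟨0, by ext; simp⟩, one_smul]
  · exact sum_congr rfl fun t ht => by rw [card_filter_sq_eq_two hF ht]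

lemma card_eq_one_add_two_mul_card_sqFinset (hF : ringChar F ≠ 2) :
    Fintype.card F = 1 + 2 * #(sqFinset F) := by
  simpa using sum_comp_sq hF fun _ => (1 : ℕ)

lemma sum_sqFinset_comp_mul {M : Type*} [AddCommMonoid M] {c : F} (hc : c ≠ 0)
    (hsq : IsSquare c) (f : F → M) : ∑ t ∈ sqFinset F, f (c * t) = ∑ t ∈ sqFinset F, f t :=
  sum_equiv (Equiv.mulLeft₀ c hc)
    (fun t => by simp [mem_sqFinset, hc, isSquare_mul_iff_of_isSquare hc hsq]) fun _ _ => rfl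

lemma sum_sqFinset_addChar_mul (hq : Fintype.card F % 4 = 3) (ψ : AddChar F ℂ) {c : F}
    (hc : c ≠ 0) : ∑ t ∈ sqFinset F, ψ (c * t) = zsig ψ c := by
  by_cases hsq : IsSquare c
  · rw [zsig, if_pos hsq, sum_sqFinset_comp_mul hc hsq, zval]
  · have hconj (t : F) : ψ (c * t) = starRingEnd ℂ (ψ (-c * t)) := by
      rw [← AddChar.map_neg_eq_conj, neg_mul, neg_neg]
    rw [zsig, if_neg hsq, sum_congr rfl fun t _ => hconj t, ← map_sum,
      sum_sqFinset_comp_mul (neg_ne_zero.mpr hc) (isSquare_neg_of_not_isSquare hq hsq), zval]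

lemma sum_addChar_mul_sq (hq : Fintype.card F % 4 = 3) (ψ : AddChar F ℂ) {c : F} (hc : c ≠ 0) :
    ∑ x, ψ (c * x ^ 2) = 1 + 2 * zsig ψ c := by
  rw [sum_comp_sq (ringChar_ne_two_of_card_mod_four hq) fun t => ψ (c * t), mul_zero,
    AddChar.map_zero_eq_one, sum_sqFinset_addChar_mul hq ψ hc, nsmul_eq_mul, Nat.cast_ofNat]

lemma sum_addChar_mul_sq_div_two_add (hq : Fintype.card F % 4 = 3) (ψ : AddChar F ℂ) {s : F}
    (hs : s ∈ sqFinset F) (w : F) :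
    ∑ x, ψ (s * x ^ 2 / 2 + s * w) = ψ (s * w) * (1 + 2 * zsig ψ 2) := by
  rw [mem_sqFinset] at hs
  have h2 : (2 : F) ≠ 0 := Ring.two_ne_zero (ringChar_ne_two_of_card_mod_four hq)
  have hzsig : zsig ψ (s / 2) = zsig ψ 2 := by
    simp only [zsig, div_eq_mul_inv, isSquare_mul_iff_of_isSquare hs.1 hs.2, isSquare_inv]
  calc ∑ x, ψ (s * x ^ 2 / 2 + s * w) = ∑ x, ψ (s * w) * ψ (s / 2 * x ^ 2) := by
        refine sum_congr rfl fun x _ => ?_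
        rw [← AddChar.map_add_eq_mul]
        ring_nf
    _ = ψ (s * w) * (1 + 2 * zsig ψ 2) := by
        rw [← mul_sum, sum_addChar_mul_sq hq ψ (div_ne_zero hs.1 h2), hzsig]

end

theorem stmt_6_general {F : Type*} [Field F] [Fintype F]
    (hq : Fintype.card F % 4 = 3) (ψ : AddChar F ℂ) (i j : F) :
    (i + j = 0 →
      ∑ s ∈ sqFinset F, ∑ x : F, ψ (s * x ^ 2 / 2 + s * (i + j)) =
        (((Fintype.card F : ℂ) - 1) / 2) * (1 + 2 * zsig ψ 2)) ∧
    (i + j ≠ 0 →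
      ∑ s ∈ sqFinset F, ∑ x : F, ψ (s * x ^ 2 / 2 + s * (i + j)) =
        zsig ψ (i + j) * (1 + 2 * zsig ψ 2)) := by
  rw [sum_congr rfl fun s hs => sum_addChar_mul_sq_div_two_add hq ψ hs (i + j), ← sum_mul]
  refine ⟨fun h => ?_, fun h => ?_⟩
  · have hcard : (Fintype.card F : ℂ) = 1 + 2 * #(sqFinset F) :=
      mod_cast card_eq_one_add_two_mul_card_sqFinset (ringChar_ne_two_of_card_mod_four hq)
    simp only [h, mul_zero, AddChar.map_zero_eq_one, sum_const, nsmul_eq_mul, mul_one, hcard]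
    ring
  · simp_rw [mul_comm _ (i + j)]
    rw [sum_sqFinset_addChar_mul hq ψ h]

/-- for `q ≡ 3 (mod 4)` and the canonical additive character `τ`,
`Σ_{s ∈ (F_q^*)², x ∈ F_q} τ(s·x²/2 + s(i+j))` equals
`((q-1)/2)(1 + 2 z^{σ(2)})` if `i + j = 0`, and `z^{σ(i+j)}(1 + 2 z^{σ(2)})`
if `i + j ≠ 0`. -/
theorem stmt_6 {F : Type*} [Field F] [Fintype F]
    (hq : Fintype.card F % 4 = 3) (ψ : AddChar F ℂ) (hψ : ψ ≠ 1) (i j : F) :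
    (i + j = 0 →
      ∑ s ∈ sqFinset F, ∑ x : F, ψ (s * x ^ 2 / 2 + s * (i + j)) =
        (((Fintype.card F : ℂ) - 1) / 2) * (1 + 2 * zsig ψ 2)) ∧
    (i + j ≠ 0 →
      ∑ s ∈ sqFinset F, ∑ x : F, ψ (s * x ^ 2 / 2 + s * (i + j)) =
        zsig ψ (i + j) * (1 + 2 * zsig ψ 2)) :=
  stmt_6_general hq ψ i j
end

section
/- Let q = pⁿ with p odd, V = F_q³, F the group of coordinatewise Galois automorphisms of V (order n), E the unitriangular group {E(x)} and V_+ the translations. For every g ∈ FEV_+ ∖ V_+, the index [V_+ : C_{V_+}(g)] is at least p². -/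
/-- The unitriangular matrix E(x) with rows (1, x, x²/2), (0,1,x), (0,0,1). -/
def Emat {F : Type*} [Field F] (x : F) : Matrix (Fin 3) (Fin 3) F :=
  !![1, x, x ^ 2 / 2; 0, 1, x; 0, 0, 1]

/-!
Translation by `c` commutes with `g = f·E(x)·w₊` exactly when `c` is fixed by the additive map
`c ↦ f(E(x) c)`, so the centralizer is an additive subgroup of the `p`-group `V = F³`. In a
`p`-group every proper subgroup has index at least `p`, hence it suffices to squeeze one subgroup
strictly between the centralizer and `V`. If `f ≠ 1` take the vectors whose last coordinate is
fixed by `f` (witnesses `(a, 0, 0)` and `(0, 0, a)` with `f a ≠ a`); if `f = 1`, then `x ≠ 0`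
and the vectors with last coordinate `0` will do.
-/

open Matrix

lemma Emat_mulVec {F : Type*} [Field F] (x : F) (v : Fin 3 → F) :
    Emat x *ᵥ v = ![v 0 + x * v 1 + x ^ 2 / 2 * v 2, v 1 + x * v 2, v 2] := by
  ext k
  fin_cases k <;> simp [Emat, mulVec, dotProduct, Fin.sum_univ_three]

namespace AddSubgroup

variable {G : Type*} [AddGroup G] {p n : ℕ}

lemma prime_le_index_of_ne_top (hp : p.Prime) (hG : Nat.card G ∣ p ^ n)
    {H : AddSubgroup G} (hH : H ≠ ⊤) : p ≤ H.index := by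
  obtain ⟨k, -, hk⟩ := (Nat.dvd_prime_pow hp).mp (H.index_dvd_card.trans hG)
  have hk0 : k ≠ 0 := by
    rintro rfl
    exact hH (index_eq_one.mp (by rw [hk, pow_zero]))
  rw [hk]
  exact Nat.le_self_pow hk0 p

lemma prime_sq_le_index_of_lt_of_ne_top [Finite G] (hp : p.Prime) (hG : Nat.card G ∣ p ^ n)
    {H K : AddSubgroup G} (hHK : H < K) (hK : K ≠ ⊤) : p ^ 2 ≤ H.index := by
  have hrel : p ≤ H.relIndex K :=
    prime_le_index_of_ne_top hp (K.card_addSubgroup_dvd_card.trans hG)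
      (fun h => hHK.not_ge (addSubgroupOf_eq_top.mp h))
  rw [← relIndex_mul_index hHK.le, sq]
  exact Nat.mul_le_mul hrel (prime_le_index_of_ne_top hp hG hK)

end AddSubgroup

section TwistedE

variable {F : Type*} [Field F] (f : F ≃+* F) (x : F)

/-- The linear part `f·E(x)` of `g = f·E(x)·w₊`; it is only `f`-semilinear, hence additive. -/
def twistedE : (Fin 3 → F) →+ (Fin 3 → F) :=
  (AddMonoidHom.compLeft (f : F →+ F) (Fin 3)).comp (Emat x).mulVecLin.toAddMonoidHom

abbrev twistedEFix : AddSubgroup (Fin 3 → F) :=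
  (twistedE f x).eqLocus (AddMonoidHom.id _)

variable {f x}

lemma mem_twistedEFix {c : Fin 3 → F} :
    c ∈ twistedEFix f x ↔ ∀ k, f ((Emat x *ᵥ c) k) = c k :=
  funext_iff

lemma exists_twistedEFix_lt_of_apply_ne {a : F} (ha : f a ≠ a) :
    ∃ H, twistedEFix f x < H ∧ H ≠ ⊤ := by
  refine ⟨((f : F →+ F).eqLocus (.id F)).comap (Pi.evalAddMonoidHom (fun _ => F) 2), ?_, ?_⟩
  · refine SetLike.lt_iff_le_and_exists.mpr ⟨fun c hc => ?_, ![a, 0, 0], ?_, ?_⟩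
    · show f (c 2) = c 2
      simpa [Emat_mulVec] using mem_twistedEFix.mp hc 2
    · exact map_zero f
    · exact fun h => ha (by simpa [Emat_mulVec] using mem_twistedEFix.mp h 0)
  · intro h
    exact ha (SetLike.ext_iff.mp h ![0, 0, a] |>.mpr trivial)

lemma exists_twistedEFix_lt_of_ne_zero (hf : ∀ a, f a = a) (hx : x ≠ 0) :
    ∃ H, twistedEFix f x < H ∧ H ≠ ⊤ := by
  refine ⟨(Pi.evalAddMonoidHom (fun _ => F) 2).ker, ?_, ?_⟩
  · refine SetLike.lt_iff_le_and_exists.mpr ⟨fun c hc => ?_, ![0, 1, 0], ?_, ?_⟩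
    · simpa [Emat_mulVec, hf, hx] using mem_twistedEFix.mp hc 1
    · simp
    · exact fun h => hx (by simpa [Emat_mulVec, hf] using mem_twistedEFix.mp h 0)
  · intro h
    simpa using SetLike.ext_iff.mp h ![0, 0, 1] |>.mpr trivial

lemma commute_add_iff_mem_twistedEFix {w : Fin 3 → F} {g : (Fin 3 → F) → (Fin 3 → F)}
    (hg : ∀ v, g v = twistedE f x v + w) {c : Fin 3 → F} :
    (∀ v, g (v + c) = g v + c) ↔ c ∈ twistedEFix f x := by
  simp only [hg, map_add]
  refine ⟨fun h => ?_, fun h v => ?_⟩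
  · have h0 := h 0
    rw [map_zero, zero_add, zero_add, add_comm w] at h0
    exact add_right_cancel h0
  · rw [show twistedE f x c = c from h, add_right_comm _ _ w]

end TwistedE

theorem stmt_15_general {F : Type*} [Field F] [Fintype F] (p : ℕ) [CharP F p]
    (f : F ≃+* F) (x : F) (w : Fin 3 → F)
    (g : (Fin 3 → F) → (Fin 3 → F))
    (hg : ∀ v, g v = (fun k => f ((Emat x).mulVec v k)) + w)
    (hnt : ¬ ∃ c : Fin 3 → F, ∀ v, g v = v + c) :
    p ^ 2 * Nat.card {c : Fin 3 → F | ∀ v, g (v + c) = g v + c} ≤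
      Fintype.card (Fin 3 → F) := by
  obtain ⟨n, hprime, hcard⟩ := FiniteField.card F p
  have hV : Nat.card (Fin 3 → F) ∣ p ^ (n * 3 : ℕ) := by
    rw [Nat.card_eq_fintype_card, Fintype.card_fun, hcard, Fintype.card_fin, pow_mul]
  obtain ⟨H, hCH, hH⟩ : ∃ H, twistedEFix f x < H ∧ H ≠ ⊤ := by
    by_cases hf : ∀ a, f a = a
    · refine exists_twistedEFix_lt_of_ne_zero hf fun hx => hnt ⟨w, fun v => ?_⟩
      ext k
      fin_cases k <;> simp [hg, hx, hf, Emat_mulVec]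
    · obtain ⟨a, ha⟩ := not_forall.mp hf
      exact exists_twistedEFix_lt_of_apply_ne ha
  have hC : {c : Fin 3 → F | ∀ v, g (v + c) = g v + c} = twistedEFix f x :=
    Set.ext fun _ => commute_add_iff_mem_twistedEFix hg
  rw [hC, ← Nat.card_eq_fintype_card, ← (twistedEFix f x).index_mul_card]
  exact Nat.mul_le_mul_right _ (AddSubgroup.prime_sq_le_index_of_lt_of_ne_top hprime hV hCH hH)

/-- let `g = f·E(x)·w₊ ∈ F·E·V₊` (apply `E(x)`, then the
coordinatewise Galois automorphism `f`, then translate by `w`). If `g` is not a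
translation, then the centralizer of `g` in `V₊` (identified with the set of
`c ∈ V` whose translation commutes with `g`) has index at least `p²` in `V₊`. -/
theorem stmt_15 {F : Type*} [Field F] [Fintype F] (p : ℕ) [Fact p.Prime] [CharP F p]
    (hp : p ≠ 2) (f : F ≃+* F) (x : F) (w : Fin 3 → F)
    (g : (Fin 3 → F) → (Fin 3 → F))
    (hg : ∀ v, g v = (fun k => f ((Emat x).mulVec v k)) + w)
    (hnt : ¬ ∃ c : Fin 3 → F, ∀ v, g v = v + c) :
    p ^ 2 * Nat.card {c : Fin 3 → F | ∀ v, g (v + c) = g v + c} ≤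
      Fintype.card (Fin 3 → F) :=
  stmt_15_general p f x w g hg hnt
end
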